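/- arXiv:2002.03202 — 3 statements merged into one kernel-verified Lean document; each statement's English description precedes it below -/
import Mathlib

section
/- If an evolution family T admits a ρ-nonuniform exponential dichotomy with projections P(t), constants λ, D > 0 and ε ≥ 0, then the family of norms defined by ‖x‖_t = sup_{τ≥t} e^{λ(ρ(τ)-ρ(t))} ‖T(τ,t)P(t)x‖ + sup_{τ∈[0,t]} e^{λ(ρ(t)-ρ(τ))} ‖T(τ,t)(Id−P(t))x‖ satisfies ‖x‖ ≤ ‖x‖_t ≤ 2D e^{ερ(t)} ‖x‖ for all x ∈ X and t ≥ 0. -/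
open MeasureTheory Set Filter

/-- If an evolution family `T` admits a ρ-nonuniform exponential dichotomy with
projections `P t`, constants λ, D > 0, ε ≥ 0 (with `Tm t s`, for `t ≤ s`, denoting
the operator `T(t,s)(Id − P(s))` given by the inverse on kernels), then the norms
`‖x‖_t = sup_{τ≥t} e^{λ(ρ τ − ρ t)}‖T(τ,t)P(t)x‖ + sup_{τ∈[0,t]} e^{λ(ρ t − ρ τ)}‖T(τ,t)(Id−P(t))x‖`
satisfy `‖x‖ ≤ ‖x‖_t ≤ 2D e^{ερ(t)}‖x‖` for all `x` and `t ≥ 0`. -/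
theorem stmt1 {X : Type*} [NormedAddCommGroup X] [NormedSpace ℝ X] [CompleteSpace X]
    (T : ℝ → ℝ → X →L[ℝ] X) (Tm : ℝ → ℝ → X →L[ℝ] X) (P : ℝ → X →L[ℝ] X)
    (ρ : ℝ → ℝ) (hmono : StrictMonoOn ρ (Ici 0)) (hρ0 : ρ 0 = 0)
    (l D ε : ℝ) (hl : 0 < l) (hD : 0 < D) (hε : 0 ≤ ε)
    -- evolution family
    (hid : ∀ t ≥ (0:ℝ), T t t = ContinuousLinearMap.id ℝ X)
    (hcoc : ∀ τ s t, 0 ≤ τ → τ ≤ s → s ≤ t → T t s ∘L T s τ = T t τ)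
    -- projections commuting with the family
    (hproj : ∀ t ≥ (0:ℝ), P t ∘L P t = P t)
    (hcomm : ∀ s t, 0 ≤ s → s ≤ t → T t s ∘L P s = P t ∘L T t s)
    -- `Tm t s` for `t ≤ s` is `T(t,s)(Id − P(s))`: a right inverse of `T s t` landing
    -- in the kernel of `P t`, killed on the range of `P s`
    (hTm_inv : ∀ t s, 0 ≤ t → t ≤ s → ∀ x, T s t (Tm t s x) = x - P s x)
    (hTm_ker : ∀ t s, 0 ≤ t → t ≤ s → ∀ x, P t (Tm t s x) = 0)
    (hTm_id : ∀ t ≥ (0:ℝ), ∀ x, Tm t t x = x - P t x)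
    -- dichotomy estimates
    (hstab : ∀ s t, 0 ≤ s → s ≤ t →
      ‖T t s ∘L P s‖ ≤ D * Real.exp (-l * (ρ t - ρ s) + ε * ρ s))
    (hunst : ∀ t s, 0 ≤ t → t ≤ s →
      ‖Tm t s ∘L (ContinuousLinearMap.id ℝ X - P s)‖ ≤
        D * Real.exp (-l * (ρ s - ρ t) + ε * ρ s)) :
    ∀ (x : X) (t : ℝ), 0 ≤ t →
      ‖x‖ ≤ ((⨆ τ : {τ : ℝ // t ≤ τ}, Real.exp (l * (ρ τ - ρ t)) * ‖T τ t (P t x)‖) +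
              ⨆ τ : {τ : ℝ // τ ∈ Icc 0 t}, Real.exp (l * (ρ t - ρ τ)) * ‖Tm τ t (x - P t x)‖) ∧
      ((⨆ τ : {τ : ℝ // t ≤ τ}, Real.exp (l * (ρ τ - ρ t)) * ‖T τ t (P t x)‖) +
              ⨆ τ : {τ : ℝ // τ ∈ Icc 0 t}, Real.exp (l * (ρ t - ρ τ)) * ‖Tm τ t (x - P t x)‖)
        ≤ 2 * D * Real.exp (ε * ρ t) * ‖x‖ := by

  intro x t ht
  set B := D * Real.exp (ε * ρ t) * ‖x‖ with hB
  have hx0 : (0:ℝ) ≤ ‖x‖ := norm_nonneg x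
  have bound1 : ∀ τ : {τ : ℝ // t ≤ τ},
      Real.exp (l * (ρ τ - ρ t)) * ‖T τ t (P t x)‖ ≤ B := by
    rintro ⟨τ, hτ⟩
    have h1 : ‖T τ t (P t x)‖ ≤ ‖T τ t ∘L P t‖ * ‖x‖ :=
      (T τ t ∘L P t).le_opNorm x
    have h2 := hstab t τ ht hτ
    have h3 : ‖T τ t (P t x)‖ ≤ D * Real.exp (-l * (ρ τ - ρ t) + ε * ρ t) * ‖x‖ :=
      h1.trans (by exact mul_le_mul_of_nonneg_right h2 hx0)
    calc Real.exp (l * (ρ τ - ρ t)) * ‖T τ t (P t x)‖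
        ≤ Real.exp (l * (ρ τ - ρ t)) * (D * Real.exp (-l * (ρ τ - ρ t) + ε * ρ t) * ‖x‖) :=
          mul_le_mul_of_nonneg_left h3 (Real.exp_nonneg _)
      _ = B := by
          rw [hB]
          rw [show Real.exp (l * (ρ τ - ρ t)) * (D * Real.exp (-l * (ρ τ - ρ t) + ε * ρ t) * ‖x‖)
            = D * (Real.exp (l * (ρ τ - ρ t)) * Real.exp (-l * (ρ τ - ρ t) + ε * ρ t)) * ‖x‖ by ring,
            ← Real.exp_add]
          ring_nf
  have bound2 : ∀ τ : {τ : ℝ // τ ∈ Icc 0 t},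
      Real.exp (l * (ρ t - ρ τ)) * ‖Tm τ t (x - P t x)‖ ≤ B := by
    rintro ⟨τ, hτ0, hτt⟩
    have hval : Tm τ t (x - P t x) = (Tm τ t ∘L (ContinuousLinearMap.id ℝ X - P t)) x := by
      simp [ContinuousLinearMap.comp_apply, ContinuousLinearMap.sub_apply]
    have h1 : ‖Tm τ t (x - P t x)‖
        ≤ ‖Tm τ t ∘L (ContinuousLinearMap.id ℝ X - P t)‖ * ‖x‖ := by
      rw [hval]; exact (Tm τ t ∘L (ContinuousLinearMap.id ℝ X - P t)).le_opNorm x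
    have h2 := hunst τ t hτ0 hτt
    have h3 : ‖Tm τ t (x - P t x)‖ ≤ D * Real.exp (-l * (ρ t - ρ τ) + ε * ρ t) * ‖x‖ :=
      h1.trans (by exact mul_le_mul_of_nonneg_right h2 hx0)
    calc Real.exp (l * (ρ t - ρ τ)) * ‖Tm τ t (x - P t x)‖
        ≤ Real.exp (l * (ρ t - ρ τ)) * (D * Real.exp (-l * (ρ t - ρ τ) + ε * ρ t) * ‖x‖) :=
          mul_le_mul_of_nonneg_left h3 (Real.exp_nonneg _)
      _ = B := by
          rw [hB]
          rw [show Real.exp (l * (ρ t - ρ τ)) * (D * Real.exp (-l * (ρ t - ρ τ) + ε * ρ t) * ‖x‖)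
            = D * (Real.exp (l * (ρ t - ρ τ)) * Real.exp (-l * (ρ t - ρ τ) + ε * ρ t)) * ‖x‖ by ring,
            ← Real.exp_add]
          ring_nf
  have hbdd1 : BddAbove (Set.range fun τ : {τ : ℝ // t ≤ τ} =>
      Real.exp (l * (ρ τ - ρ t)) * ‖T τ t (P t x)‖) := by
    refine ⟨B, ?_⟩; rintro _ ⟨τ, rfl⟩; exact bound1 τ
  have hbdd2 : BddAbove (Set.range fun τ : {τ : ℝ // τ ∈ Icc 0 t} =>
      Real.exp (l * (ρ t - ρ τ)) * ‖Tm τ t (x - P t x)‖) := by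
    refine ⟨B, ?_⟩; rintro _ ⟨τ, rfl⟩; exact bound2 τ
  have hne1 : Nonempty {τ : ℝ // t ≤ τ} := ⟨⟨t, le_refl t⟩⟩
  have hne2 : Nonempty {τ : ℝ // τ ∈ Icc 0 t} := ⟨⟨t, ht, le_refl t⟩⟩
  constructor
  · -- lower bound
    have k1 : ‖P t x‖ ≤ ⨆ τ : {τ : ℝ // t ≤ τ},
        Real.exp (l * (ρ τ - ρ t)) * ‖T τ t (P t x)‖ := by
      have := le_ciSup hbdd1 ⟨t, le_refl t⟩
      simpa [hid t ht] using this
    have k2 : ‖x - P t x‖ ≤ ⨆ τ : {τ : ℝ // τ ∈ Icc 0 t},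
        Real.exp (l * (ρ t - ρ τ)) * ‖Tm τ t (x - P t x)‖ := by
      have := le_ciSup hbdd2 ⟨t, ht, le_refl t⟩
      have hPidem : P t (P t x) = P t x := by
        have := congrArg (fun f => f x) (hproj t ht)
        simpa [ContinuousLinearMap.comp_apply] using this
      have hTmval : Tm t t (x - P t x) = x - P t x := by
        rw [hTm_id t ht]
        simp [map_sub, hPidem]
      simpa [hTmval] using this
    calc ‖x‖ = ‖P t x + (x - P t x)‖ := by congr 1; abel
      _ ≤ ‖P t x‖ + ‖x - P t x‖ := norm_add_le _ _
      _ ≤ _ := add_le_add k1 k2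
  · have s1 : (⨆ τ : {τ : ℝ // t ≤ τ},
        Real.exp (l * (ρ τ - ρ t)) * ‖T τ t (P t x)‖) ≤ B := ciSup_le bound1
    have s2 : (⨆ τ : {τ : ℝ // τ ∈ Icc 0 t},
        Real.exp (l * (ρ t - ρ τ)) * ‖Tm τ t (x - P t x)‖) ≤ B := ciSup_le bound2
    have := add_le_add s1 s2
    calc _ ≤ B + B := this
      _ = 2 * D * Real.exp (ε * ρ t) * ‖x‖ := by rw [hB]; ring
end

section
/- If an evolution family T admits a ρ-nonuniform exponential dichotomy with projections P(t), then with respect to the adapted norms ‖x‖_t = sup_{τ≥t} e^{λ(ρ(τ)-ρ(t))} ‖T(τ,t)P(t)x‖ + sup_{τ∈[0,t]} e^{λ(ρ(t)-ρ(τ))} ‖T(τ,t)(Id−P(t))x‖, one has ‖T(t,s)P(s)x‖_t ≤ e^{-λ(ρ(t)-ρ(s))} ‖x‖_s for all t ≥ s ≥ 0 and x ∈ X. -/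
open MeasureTheory Set Filter

/-- If an evolution family `T` admits a ρ-nonuniform exponential dichotomy with
projections `P t` (with `Tm t s`, for `t ≤ s`, denoting `T(t,s)(Id − P(s))` given
by the inverse on kernels), then with respect to the adapted norms
`‖x‖_t = sup_{τ≥t} e^{λ(ρ τ − ρ t)}‖T(τ,t)P(t)x‖ + sup_{τ∈[0,t]} e^{λ(ρ t − ρ τ)}‖T(τ,t)(Id−P(t))x‖`
one has `‖T(t,s)P(s)x‖_t ≤ e^{-λ(ρ t − ρ s)}‖x‖_s` for all `t ≥ s ≥ 0` and `x`. -/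
theorem stmt2 {X : Type*} [NormedAddCommGroup X] [NormedSpace ℝ X] [CompleteSpace X]
    (T : ℝ → ℝ → X →L[ℝ] X) (Tm : ℝ → ℝ → X →L[ℝ] X) (P : ℝ → X →L[ℝ] X)
    (ρ : ℝ → ℝ) (hmono : StrictMonoOn ρ (Ici 0)) (hρ0 : ρ 0 = 0)
    (l D ε : ℝ) (hl : 0 < l) (hD : 0 < D) (hε : 0 ≤ ε)
    -- evolution family
    (hid : ∀ t ≥ (0:ℝ), T t t = ContinuousLinearMap.id ℝ X)
    (hcoc : ∀ τ s t, 0 ≤ τ → τ ≤ s → s ≤ t → T t s ∘L T s τ = T t τ)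
    -- projections commuting with the family
    (hproj : ∀ t ≥ (0:ℝ), P t ∘L P t = P t)
    (hcomm : ∀ s t, 0 ≤ s → s ≤ t → T t s ∘L P s = P t ∘L T t s)
    -- `Tm t s` for `t ≤ s` is `T(t,s)(Id − P(s))`: a right inverse of `T s t` landing
    -- in the kernel of `P t`, killed on the range of `P s`
    (hTm_inv : ∀ t s, 0 ≤ t → t ≤ s → ∀ x, T s t (Tm t s x) = x - P s x)
    (hTm_ker : ∀ t s, 0 ≤ t → t ≤ s → ∀ x, P t (Tm t s x) = 0)
    (hTm_id : ∀ t ≥ (0:ℝ), ∀ x, Tm t t x = x - P t x)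
    -- dichotomy estimates
    (hstab : ∀ s t, 0 ≤ s → s ≤ t →
      ‖T t s ∘L P s‖ ≤ D * Real.exp (-l * (ρ t - ρ s) + ε * ρ s))
    (hunst : ∀ t s, 0 ≤ t → t ≤ s →
      ‖Tm t s ∘L (ContinuousLinearMap.id ℝ X - P s)‖ ≤
        D * Real.exp (-l * (ρ s - ρ t) + ε * ρ s)) :
    ∀ (x : X) (s t : ℝ), 0 ≤ s → s ≤ t →
      ((⨆ τ : {τ : ℝ // t ≤ τ}, Real.exp (l * (ρ τ - ρ t)) * ‖T τ t (P t (T t s (P s x)))‖) +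
        ⨆ τ : {τ : ℝ // τ ∈ Icc 0 t},
          Real.exp (l * (ρ t - ρ τ)) * ‖Tm τ t (T t s (P s x) - P t (T t s (P s x)))‖)
      ≤ Real.exp (-l * (ρ t - ρ s)) *
        ((⨆ τ : {τ : ℝ // s ≤ τ}, Real.exp (l * (ρ τ - ρ s)) * ‖T τ s (P s x)‖) +
          ⨆ τ : {τ : ℝ // τ ∈ Icc 0 s}, Real.exp (l * (ρ s - ρ τ)) * ‖Tm τ s (x - P s x)‖) := by

  intro x s t hs hst
  have ht : 0 ≤ t := hs.trans hst
  have hPy : P t (T t s (P s x)) = T t s (P s x) := by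
    have h1 := congrArg (fun f => f (P s x)) (hcomm s t hs hst)
    have h2 := congrArg (fun f => f x) (hproj s hs)
    simp only [ContinuousLinearMap.comp_apply] at h1 h2
    rw [← h1, h2]
  haveI : Nonempty {τ : ℝ // τ ∈ Icc 0 t} := ⟨⟨t, ⟨ht, le_refl t⟩⟩⟩
  haveI : Nonempty {τ : ℝ // t ≤ τ} := ⟨⟨t, le_refl t⟩⟩
  have hzero : (⨆ τ : {τ : ℝ // τ ∈ Icc 0 t},
      Real.exp (l * (ρ t - ρ τ)) * ‖Tm τ t (T t s (P s x) - P t (T t s (P s x)))‖) = 0 := by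
    have h : ∀ τ : {τ : ℝ // τ ∈ Icc 0 t},
        Real.exp (l * (ρ t - ρ τ)) * ‖Tm τ t (T t s (P s x) - P t (T t s (P s x)))‖ = 0 := by
      intro τ; rw [hPy, sub_self, map_zero, norm_zero, mul_zero]
    simp only [h]
    exact ciSup_const
  have hA_bdd : BddAbove (Set.range fun τ : {τ : ℝ // s ≤ τ} =>
      Real.exp (l * (ρ τ - ρ s)) * ‖T τ s (P s x)‖) := by
    refine ⟨D * Real.exp (ε * ρ s) * ‖x‖, ?_⟩
    rintro _ ⟨τ, rfl⟩
    have h1 : ‖T τ s (P s x)‖ ≤ D * Real.exp (-l * (ρ τ - ρ s) + ε * ρ s) * ‖x‖ := by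
      calc ‖T τ s (P s x)‖ = ‖(T τ s ∘L P s) x‖ := rfl
        _ ≤ ‖T τ s ∘L P s‖ * ‖x‖ := (T (τ:ℝ) s ∘L P s).le_opNorm x
        _ ≤ D * Real.exp (-l * (ρ τ - ρ s) + ε * ρ s) * ‖x‖ := by
            gcongr
            exact hstab s τ hs τ.2
    calc Real.exp (l * (ρ τ - ρ s)) * ‖T τ s (P s x)‖
        ≤ Real.exp (l * (ρ τ - ρ s)) * (D * Real.exp (-l * (ρ τ - ρ s) + ε * ρ s) * ‖x‖) := by
          gcongr
      _ = (Real.exp (l * (ρ τ - ρ s)) * Real.exp (-l * (ρ τ - ρ s) + ε * ρ s)) * (D * ‖x‖) := by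
          ring
      _ = D * Real.exp (ε * ρ s) * ‖x‖ := by
          rw [← Real.exp_add]
          have : l * (ρ τ - ρ s) + (-l * (ρ τ - ρ s) + ε * ρ s) = ε * ρ s := by ring
          rw [this]; ring
  have hB : 0 ≤ ⨆ τ : {τ : ℝ // τ ∈ Icc 0 s},
      Real.exp (l * (ρ s - ρ τ)) * ‖Tm τ s (x - P s x)‖ :=
    Real.iSup_nonneg fun τ => by positivity
  have hmain : (⨆ τ : {τ : ℝ // t ≤ τ}, Real.exp (l * (ρ τ - ρ t)) * ‖T τ t (P t (T t s (P s x)))‖)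
      ≤ Real.exp (-l * (ρ t - ρ s)) *
        ⨆ τ : {τ : ℝ // s ≤ τ}, Real.exp (l * (ρ τ - ρ s)) * ‖T τ s (P s x)‖ := by
    apply ciSup_le
    intro τ
    have hτ : s ≤ (τ:ℝ) := hst.trans τ.2
    have hTT : T τ t (P t (T t s (P s x))) = T τ s (P s x) := by
      rw [hPy]
      have := congrArg (fun f => f (P s x)) (hcoc s t τ hs hst τ.2)
      simpa using this
    rw [hTT]
    have hle : Real.exp (l * (ρ τ - ρ s)) * ‖T τ s (P s x)‖ ≤
        ⨆ σ : {σ : ℝ // s ≤ σ}, Real.exp (l * (ρ σ - ρ s)) * ‖T σ s (P s x)‖ :=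
      le_ciSup hA_bdd ⟨(τ:ℝ), hτ⟩
    calc Real.exp (l * (ρ τ - ρ t)) * ‖T τ s (P s x)‖
        = Real.exp (-l * (ρ t - ρ s)) * (Real.exp (l * (ρ τ - ρ s)) * ‖T τ s (P s x)‖) := by
          rw [← mul_assoc, ← Real.exp_add]
          congr 2
          ring
      _ ≤ _ := by
          have := Real.exp_pos (-l * (ρ t - ρ s))
          nlinarith [norm_nonneg (T (τ:ℝ) s (P s x)), Real.exp_pos (l * (ρ (τ:ℝ) - ρ s))]
  rw [hzero, add_zero, mul_add]
  have hE := (Real.exp_pos (-l * (ρ t - ρ s))).le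
  nlinarith [hmain, hB, hE]
end

section
/- Suppose the evolution family T admits a ρ-dichotomy with respect to norms ‖·‖_t with projections P(t) and constants λ, D. If x : [0,∞) → X is continuous with sup_{t≥0} ‖x(t)‖_t < ∞, x(0) ∈ Ker P(0), and x(t) = T(t,s)x(s) for all t ≥ s ≥ 0, then x ≡ 0. -/
open Set Filter Topology

/-!
An orbit starting in `Ker P(0)` stays in `Ker P(s)`, so for `0 ≤ t ≤ s` it can be run
backwards along the unstable part: `x t = Tm t s (x s - P s (x s))`. The unstable estimate then
gives `‖x t‖ ≤ D e^{-λ(ρ(s) - ρ(t))} M` for every `s ≥ t`, and the right-hand side tends to `0`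
as `s → ∞`.
-/

lemma tendsto_exp_neg_mul_atTop {ρ : ℝ → ℝ} (hρ : Tendsto ρ atTop atTop) {l : ℝ} (hl : 0 < l) :
    Tendsto (fun s => Real.exp (-l * ρ s)) atTop (𝓝 0) := by
  have h : Tendsto (fun s => -l * ρ s) atTop atBot :=
    hρ.const_mul_atTop_of_neg (neg_neg_of_pos hl)
  exact Real.tendsto_exp_atBot.comp h

lemma eq_zero_of_norm_le_exp_decay {X : Type*} [NormedAddCommGroup X] {v : X} {ρ : ℝ → ℝ} (hρ : Tendsto ρ atTop atTop)
    {l C : ℝ} (hl : 0 < l) (h : ∀ᶠ s in atTop, ‖v‖ ≤ C * Real.exp (-l * ρ s)) : v = 0 := by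
  have hlim : Tendsto (fun s => C * Real.exp (-l * ρ s)) atTop (𝓝 0) := by
    simpa using (tendsto_exp_neg_mul_atTop hρ hl).const_mul C
  exact norm_le_zero_iff.mp (ge_of_tendsto hlim h)

section Orbit

variable {X : Type*} [NormedAddCommGroup X] [NormedSpace ℝ X]

lemma apply_orbit_eq_zero {T : ℝ → ℝ → X →L[ℝ] X} {P : ℝ → X →L[ℝ] X} {x : ℝ → X}
    (hcomm : ∀ s t, 0 ≤ s → s ≤ t → ∀ v, T t s (P s v) = P t (T t s v))
    (hx_inv : ∀ s t, 0 ≤ s → s ≤ t → x t = T t s (x s)) (hx_ker : P 0 (x 0) = 0)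
    {s : ℝ} (hs : 0 ≤ s) : P s (x s) = 0 := by
  rw [hx_inv 0 s le_rfl hs, ← hcomm 0 s le_rfl hs, hx_ker, map_zero]

lemma orbit_eq_inverse_apply {T Tm : ℝ → ℝ → X →L[ℝ] X} {P : ℝ → X →L[ℝ] X} {x : ℝ → X}
    (hTm_inv : ∀ s t, 0 ≤ s → s ≤ t → ∀ v, P s v = 0 →
      Tm s t (T t s v - P t (T t s v)) = v)
    (hx_inv : ∀ s t, 0 ≤ s → s ≤ t → x t = T t s (x s))
    {t s : ℝ} (ht : 0 ≤ t) (hts : t ≤ s) (hker : P t (x t) = 0) :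
    x t = Tm t s (x s - P s (x s)) := by
  rw [hx_inv t s ht hts]
  exact (hTm_inv t s ht hts (x t) hker).symm

end Orbit

theorem stmt6_general {X : Type*} [NormedAddCommGroup X] [NormedSpace ℝ X]
    (T : ℝ → ℝ → X →L[ℝ] X) (Tm : ℝ → ℝ → X →L[ℝ] X) (P : ℝ → X →L[ℝ] X)
    (N : ℝ → X → ℝ)
    (ρ : ℝ → ℝ)
    (hρtop : Tendsto ρ atTop atTop)
    (l D : ℝ) (hl : 0 < l) (hD : 0 < D)
    -- norms dominate `‖·‖`
    (hN_low : ∀ t ≥ (0:ℝ), ∀ v : X, ‖v‖ ≤ N t v)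
    -- projections commute with the family
    (hcomm : ∀ s t, 0 ≤ s → s ≤ t → ∀ v, T t s (P s v) = P t (T t s v))
    -- `Tm s t` is a left inverse of `T t s` on the kernel of `P s`
    (hTm_inv : ∀ s t, 0 ≤ s → s ≤ t → ∀ v, P s v = 0 →
      Tm s t (T t s v - P t (T t s v)) = v)
    -- unstable dichotomy estimate with respect to the norms `N t`
    (hunst : ∀ t s, 0 ≤ t → t ≤ s → ∀ v,
      N t (Tm t s (v - P s v)) ≤ D * Real.exp (-l * (ρ s - ρ t)) * N s v)
    -- the function `x`
    (x : ℝ → X)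
    (M : ℝ) (hx_bdd : ∀ t ≥ (0:ℝ), N t (x t) ≤ M)
    (hx_ker : P 0 (x 0) = 0)
    (hx_inv : ∀ s t, 0 ≤ s → s ≤ t → x t = T t s (x s)) :
    ∀ t ≥ (0:ℝ), x t = 0 := by
  intro t ht
  have hρt : Tendsto (fun s => ρ s - ρ t) atTop atTop := tendsto_atTop_add_const_right _ _ hρtop
  refine eq_zero_of_norm_le_exp_decay hρt hl (C := D * M) ?_
  filter_upwards [eventually_ge_atTop t] with s hts
  have hs : 0 ≤ s := ht.trans hts
  have hx_back := orbit_eq_inverse_apply hTm_inv hx_inv ht hts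
    (apply_orbit_eq_zero hcomm hx_inv hx_ker ht)
  calc ‖x t‖ ≤ N t (x t) := hN_low t ht (x t)
    _ ≤ D * Real.exp (-l * (ρ s - ρ t)) * N s (x s) := by
        rw [hx_back]; exact hunst t s ht hts (x s)
    _ ≤ D * Real.exp (-l * (ρ s - ρ t)) * M := by gcongr; exact hx_bdd s hs
    _ = D * M * Real.exp (-l * (ρ s - ρ t)) := by ring

/-- Suppose the evolution family `T` admits a ρ-dichotomy with respect to norms `N t`
with projections `P t` and constants λ, D (with `Tm t s`, for `t ≤ s`, the inverse on
kernels, i.e. `T(t,s)(Id−P(s))`). If `x : [0,∞) → X` is continuous with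
`sup_{t≥0} N t (x t) < ∞`, `x(0) ∈ Ker P(0)` and `x(t) = T(t,s)x(s)` for all
`t ≥ s ≥ 0`, then `x ≡ 0` on `[0,∞)`. -/
theorem stmt6 {X : Type*} [NormedAddCommGroup X] [NormedSpace ℝ X] [CompleteSpace X]
    (T : ℝ → ℝ → X →L[ℝ] X) (Tm : ℝ → ℝ → X →L[ℝ] X) (P : ℝ → X →L[ℝ] X)
    (N : ℝ → X → ℝ)
    (ρ : ℝ → ℝ) (hmono : StrictMonoOn ρ (Ici 0)) (hρ0 : ρ 0 = 0)
    (hρtop : Tendsto ρ atTop atTop)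
    (l D : ℝ) (hl : 0 < l) (hD : 0 < D)
    -- norms dominate `‖·‖`
    (hN_low : ∀ t ≥ (0:ℝ), ∀ v : X, ‖v‖ ≤ N t v)
    -- projections commute with the family
    (hcomm : ∀ s t, 0 ≤ s → s ≤ t → ∀ v, T t s (P s v) = P t (T t s v))
    -- `Tm s t` is a left inverse of `T t s` on the kernel of `P s`
    (hTm_inv : ∀ s t, 0 ≤ s → s ≤ t → ∀ v, P s v = 0 →
      Tm s t (T t s v - P t (T t s v)) = v)
    -- unstable dichotomy estimate with respect to the norms `N t`
    (hunst : ∀ t s, 0 ≤ t → t ≤ s → ∀ v,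
      N t (Tm t s (v - P s v)) ≤ D * Real.exp (-l * (ρ s - ρ t)) * N s v)
    -- the function `x`
    (x : ℝ → X) (hx_cont : ContinuousOn x (Ici 0))
    (M : ℝ) (hx_bdd : ∀ t ≥ (0:ℝ), N t (x t) ≤ M)
    (hx_ker : P 0 (x 0) = 0)
    (hx_inv : ∀ s t, 0 ≤ s → s ≤ t → x t = T t s (x s)) :
    ∀ t ≥ (0:ℝ), x t = 0 :=
  stmt6_general T Tm P N ρ hρtop l D hl hD hN_low hcomm hTm_inv hunst x M hx_bdd hx_ker hx_inv
end
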